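/- A deterministic program M is non-interfering if and only if GE[U](M) ≤ 0, i.e., the guessing-entropy based quantitative information flow under the uniform distribution is zero iff M is a constant function. -/
import Mathlib


open Finset Real

variable {H O : Type*} [Fintype H] [Nonempty H] [DecidableEq O]

/-- The set of inputs mapped to output `o` (the preimage `M⁻¹(o)`). -/
def fiber (M : H → O) (o : O) : Finset H := Finset.univ.filter (fun h => M h = o)

/-- The set of outputs of `M` (the image/range of `M`). -/
def outputs (M : H → O) : Finset O := Finset.univ.image M

/-- Guessing-entropy based QIF under the uniform distribution:
`G[U](H) - G[U](H|O)` with `G[U](H) = (n+1)/2` and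
`G[U](H|O) = Σ_o (|M⁻¹(o)|/n)·((|M⁻¹(o)|+1)/2)`. -/
noncomputable def GE (M : H → O) : ℝ :=
  ((Fintype.card H : ℝ) + 1) / 2 -
    ∑ o ∈ outputs M,
      ((fiber M o).card : ℝ) / (Fintype.card H : ℝ) * ((((fiber M o).card : ℝ) + 1) / 2)

theorem noninterference_iff_GE_nonpos (M : H → O) :
    (∀ h h' : H, M h = M h') ↔ GE M ≤ 0 := by
  classical
  set n := Fintype.card H with hn
  have hn0 : 0 < n := Fintype.card_pos
  have hn0R : (0:ℝ) < n := by exact_mod_cast hn0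
  have hsum : ∑ o ∈ outputs M, (fiber M o).card = n := by
    rw [hn, ← Finset.card_univ]
    exact (Finset.card_eq_sum_card_fiberwise
      (fun x _ => Finset.mem_image_of_mem M (Finset.mem_univ x))).symm
  have hrw : ∑ o ∈ outputs M,
      ((fiber M o).card : ℝ) / (n : ℝ) * ((((fiber M o).card : ℝ) + 1) / 2)
      = (∑ o ∈ outputs M, ((fiber M o).card : ℝ) * (((fiber M o).card : ℝ) + 1)) / (2 * n) := by
    rw [Finset.sum_div]
    refine Finset.sum_congr rfl fun o _ => ?_
    rw [div_mul_div_comm, mul_comm (n:ℝ) 2]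
  have key : GE M ≤ 0 ↔
      (n : ℝ) * ((n : ℝ) + 1) ≤
        ∑ o ∈ outputs M, ((fiber M o).card : ℝ) * (((fiber M o).card : ℝ) + 1) := by
    unfold GE
    rw [← hn, hrw, sub_nonpos, div_le_div_iff₀ (by norm_num) (by positivity)]
    constructor <;> intro h <;> nlinarith
  constructor
  · intro hc
    obtain ⟨h0⟩ := (inferInstance : Nonempty H)
    have houts : outputs M = {M h0} := by
      ext o
      simp only [outputs, Finset.mem_image, Finset.mem_univ, true_and, Finset.mem_singleton]
      constructor
      · rintro ⟨h, rfl⟩; exact hc h h0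
      · rintro rfl; exact ⟨h0, rfl⟩
    have hfib : fiber M (M h0) = Finset.univ := by
      ext h; simp [fiber, hc h h0]
    rw [key, houts, Finset.sum_singleton, hfib, Finset.card_univ, ← hn]
  · intro hGE h h'
    have hN : n * (n + 1) ≤ ∑ o ∈ outputs M, (fiber M o).card * ((fiber M o).card + 1) := by
      exact_mod_cast key.mp hGE
    have hle : ∀ o ∈ outputs M, (fiber M o).card * (fiber M o).card ≤ (fiber M o).card * n := by
      intro o _
      exact Nat.mul_le_mul_left _ (by rw [hn, ← Finset.card_univ]; exact Finset.card_le_card (Finset.filter_subset _ _))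
    have hsq_le : ∑ o ∈ outputs M, (fiber M o).card * (fiber M o).card ≤ n * n := by
      calc ∑ o ∈ outputs M, (fiber M o).card * (fiber M o).card
          ≤ ∑ o ∈ outputs M, (fiber M o).card * n := Finset.sum_le_sum hle
        _ = n * n := by rw [← Finset.sum_mul, hsum]
    have hexp : ∑ o ∈ outputs M, (fiber M o).card * ((fiber M o).card + 1)
        = (∑ o ∈ outputs M, (fiber M o).card * (fiber M o).card) + n := by
      rw [← hsum, ← Finset.sum_add_distrib]
      exact Finset.sum_congr rfl fun o _ => by ring
    have hsq_ge : n * n ≤ ∑ o ∈ outputs M, (fiber M o).card * (fiber M o).card := by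
      nlinarith [hN, hexp]
    have heq : ∑ o ∈ outputs M, (fiber M o).card * (fiber M o).card
        = ∑ o ∈ outputs M, (fiber M o).card * n := by
      have : ∑ o ∈ outputs M, (fiber M o).card * n = n * n := by rw [← Finset.sum_mul, hsum]
      omega
    have hall := (Finset.sum_eq_sum_iff_of_le hle).mp heq
    -- each fiber over an actual output has card n, hence is univ
    have hMh : M h = M h' := by
      have ho : M h ∈ outputs M := Finset.mem_image_of_mem M (Finset.mem_univ h)
      have hcard : (fiber M (M h)).card = n := by
        have := hall (M h) ho
        have hpos : 0 < (fiber M (M h)).card := by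
          refine Finset.card_pos.mpr ⟨h, ?_⟩
          simp [fiber]
        exact Nat.eq_of_mul_eq_mul_left hpos this
      have huniv : fiber M (M h) = Finset.univ :=
        Finset.eq_univ_of_card _ (by rw [hcard, hn])
      have : h' ∈ fiber M (M h) := huniv ▸ Finset.mem_univ h'
      have := Finset.mem_filter.mp this
      exact this.2.symm
    exact hMh
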